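/- For every real t with 0 < t < 1, the series ∑_{j=1}^∞ j^{-1} e^{-2 j^{2/d} t} (with d a positive integer) is bounded above by 1 - (d/2)·ln t + C for some constant C depending only on d. -/

import Mathlib

/-! Split the series at `N ≈ t^(-d/2)`. Bounding the exponential by `1`, the head is at most the
harmonic number `H_N ≤ 1 + log N = 1 - (d/2) log t + O(1)`. On the tail, `exp (-x) ≤ d! / x^d`
with `x = 2 j^(2/d) t` gives terms `≤ d! (2t)^(-d) j^(-3)`, whose sum beyond `N` is
`O(t^(-d) N^(-2)) = O(1)`. -/

open Real Finset

theorem exp_neg_le_factorial_div_pow {x : ℝ} (hx : 0 < x) (n : ℕ) :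
    exp (-x) ≤ n.factorial / x ^ n := by
  have h := Real.pow_div_factorial_le_exp x hx.le n
  rw [div_le_iff₀ (by positivity)] at h
  rw [exp_neg, inv_eq_one_div, div_le_div_iff₀ (exp_pos x) (by positivity)]
  linarith

theorem tsum_inv_nat_add_pow_three_le {N : ℕ} (hN : 1 ≤ N) :
    ∑' j : ℕ, ((j + N : ℝ) + 1)⁻¹ ^ 3 ≤ 1 / (2 * N ^ 2) := by
  -- telescoping: `1 / (2k²) - 1 / (2(k+1)²) = (2k+1) / (2k²(k+1)²) ≥ (k+1)⁻³`
  set g : ℕ → ℝ := fun j => 1 / (2 * (j + N : ℝ) ^ 2)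
  have hg : ∀ j, 0 ≤ g j := fun j => by positivity
  have hterm : ∀ j : ℕ, ((j + N : ℝ) + 1)⁻¹ ^ 3 ≤ g j - g (j + 1) := by
    intro j
    have hk : (1 : ℝ) ≤ j + N := by
      have : (1 : ℝ) ≤ N := by exact_mod_cast hN
      linarith [(Nat.cast_nonneg j : (0 : ℝ) ≤ j)]
    simp only [g, Nat.cast_succ]
    rw [show (j : ℝ) + 1 + N = (j + N) + 1 by ring, inv_pow, div_sub_div _ _ (by positivity)
      (by positivity), inv_eq_one_div, div_le_div_iff₀ (by positivity) (by positivity)]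
    nlinarith [pow_pos (by linarith : (0 : ℝ) < j + N) 3]
  refine Real.tsum_le_of_sum_range_le (fun j => by positivity) fun n => ?_
  calc ∑ j ∈ range n, ((j + N : ℝ) + 1)⁻¹ ^ 3
      ≤ ∑ j ∈ range n, (g j - g (j + 1)) := sum_le_sum fun j _ => hterm j
    _ = g 0 - g n := sum_range_sub' g n
    _ ≤ 1 / (2 * N ^ 2) := by simp only [g, Nat.cast_zero, zero_add]; linarith [hg n]

noncomputable def stokesHSTerm (d : ℕ) (t : ℝ) (j : ℕ) : ℝ :=
  ((j : ℝ) + 1)⁻¹ * exp (-2 * ((j : ℝ) + 1) ^ ((2 : ℝ) / d) * t)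

section stokesHSTerm

variable {d : ℕ} {t : ℝ}

theorem stokesHSTerm_nonneg (j : ℕ) : 0 ≤ stokesHSTerm d t j := by
  unfold stokesHSTerm; positivity

theorem stokesHSTerm_le_inv (ht : 0 ≤ t) (j : ℕ) : stokesHSTerm d t j ≤ ((j : ℝ) + 1)⁻¹ := by
  refine mul_le_of_le_one_right (by positivity) (exp_le_one_iff.2 ?_)
  have : 0 ≤ ((j : ℝ) + 1) ^ ((2 : ℝ) / d) := by positivity
  nlinarith

theorem stokesHSTerm_le_inv_pow_three (hd : d ≠ 0) (ht : 0 < t) (j : ℕ) :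
    stokesHSTerm d t j ≤ d.factorial / (2 * t) ^ d * ((j : ℝ) + 1)⁻¹ ^ 3 := by
  set r : ℝ := (j : ℝ) + 1
  have hr : 0 < r := by positivity
  have hpow : (2 * r ^ ((2 : ℝ) / d) * t) ^ d = (2 * t) ^ d * r ^ 2 := by
    rw [mul_right_comm, mul_pow, ← rpow_mul_natCast hr.le,
      div_mul_cancel₀ _ (Nat.cast_ne_zero.2 hd), rpow_two, mul_comm]
  calc stokesHSTerm d t j = r⁻¹ * exp (-(2 * r ^ ((2 : ℝ) / d) * t)) := by
        simp only [stokesHSTerm, r, neg_mul]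
    _ ≤ r⁻¹ * (d.factorial / (2 * t) ^ d / r ^ 2) := by
        rw [div_div, ← hpow]
        exact mul_le_mul_of_nonneg_left (exp_neg_le_factorial_div_pow (by positivity) d)
          (by positivity)
    _ = d.factorial / (2 * t) ^ d * r⁻¹ ^ 3 := by field_simp

theorem summable_stokesHSTerm (hd : d ≠ 0) (ht : 0 < t) : Summable (stokesHSTerm d t) := by
  have hcube : Summable fun j : ℕ => ((j : ℝ) + 1)⁻¹ ^ 3 := by
    simpa using (summable_nat_add_iff 1).2 (summable_nat_pow_inv.2 (by norm_num : 1 < 3))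
  exact .of_nonneg_of_le stokesHSTerm_nonneg (stokesHSTerm_le_inv_pow_three hd ht)
    (hcube.mul_left _)

theorem sum_range_stokesHSTerm_le (ht : 0 ≤ t) (N : ℕ) :
    ∑ j ∈ range N, stokesHSTerm d t j ≤ 1 + log N := by
  calc ∑ j ∈ range N, stokesHSTerm d t j ≤ ∑ j ∈ range N, ((j : ℝ) + 1)⁻¹ :=
        sum_le_sum fun j _ => stokesHSTerm_le_inv ht j
    _ = harmonic N := by simp [harmonic]
    _ ≤ 1 + log N := harmonic_le_one_add_log N

theorem tsum_stokesHSTerm_nat_add_le (hd : d ≠ 0) (ht : 0 < t) {N : ℕ} (hN : 1 ≤ N) :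
    ∑' j, stokesHSTerm d t (j + N) ≤ d.factorial / (2 * t) ^ d * (1 / (2 * N ^ 2)) := by
  have hcube : Summable fun j : ℕ => ((j + N : ℝ) + 1)⁻¹ ^ 3 := by
    simpa [add_assoc] using
      (summable_nat_add_iff (N + 1)).2 (summable_nat_pow_inv.2 (by norm_num : 1 < 3))
  calc ∑' j, stokesHSTerm d t (j + N)
      ≤ ∑' j : ℕ, d.factorial / (2 * t) ^ d * ((j + N : ℝ) + 1)⁻¹ ^ 3 := by
        refine ((summable_nat_add_iff N).2 (summable_stokesHSTerm hd ht)).tsum_le_tsum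
          (fun j => ?_) (hcube.mul_left _)
        simpa using stokesHSTerm_le_inv_pow_three hd ht (j + N)
    _ ≤ d.factorial / (2 * t) ^ d * (1 / (2 * N ^ 2)) := by
        rw [tsum_mul_left]
        exact mul_le_mul_of_nonneg_left (tsum_inv_nat_add_pow_three_le hN) (by positivity)

end stokesHSTerm

theorem exists_cutoff {t : ℝ} (ht : 0 < t) (ht1 : t ≤ 1) (d : ℕ) :
    ∃ N : ℕ, 1 ≤ N ∧ log N ≤ log 2 - (d / 2) * log t ∧ 1 ≤ t ^ d * N ^ 2 := by
  set s := (√(t ^ d))⁻¹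
  have hs1 : 1 ≤ s := one_le_inv₀ (by positivity) |>.2 (sqrt_le_one.2 (pow_le_one₀ ht.le ht1))
  have hsN : s ≤ ⌈s⌉₊ := Nat.le_ceil s
  refine ⟨⌈s⌉₊, Nat.one_le_cast.1 (hs1.trans hsN), ?_, ?_⟩
  · calc log ⌈s⌉₊ ≤ log (2 * s) := log_le_log (by positivity) (Nat.ceil_le_two_mul (by linarith))
      _ = log 2 - (d / 2) * log t := by
        rw [log_mul two_ne_zero (by positivity), log_inv, log_sqrt (by positivity), log_pow]; ring
  · calc 1 = t ^ d * s ^ 2 := by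
          rw [inv_pow, sq_sqrt (by positivity), mul_inv_cancel₀ (by positivity)]
      _ ≤ t ^ d * ⌈s⌉₊ ^ 2 := by gcongr

/-- For every integer `d ≥ 1` there is a constant `C` (depending only on `d`)
such that for all `t ∈ (0,1)`,
`∑_{j=1}^∞ j⁻¹ exp(-2 j^(2/d) t) ≤ 1 - (d/2) log t + C`. -/
theorem stmt_0 (d : ℕ) (hd : 1 ≤ d) :
    ∃ C : ℝ, ∀ t : ℝ, 0 < t → t < 1 →
      (∑' j : ℕ, ((j : ℝ) + 1)⁻¹ * Real.exp (-2 * ((j : ℝ) + 1) ^ ((2 : ℝ) / d) * t))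
        ≤ 1 - ((d : ℝ) / 2) * Real.log t + C := by
  have hd0 : d ≠ 0 := by omega
  refine ⟨log 2 + d.factorial / 2 ^ (d + 1), fun t ht ht1 => ?_⟩
  obtain ⟨N, hN1, hlogN, htN⟩ := exists_cutoff ht ht1.le d
  have htail : ∑' j, stokesHSTerm d t (j + N) ≤ d.factorial / 2 ^ (d + 1) :=
    calc ∑' j, stokesHSTerm d t (j + N)
        ≤ d.factorial / (2 * t) ^ d * (1 / (2 * N ^ 2)) :=
          tsum_stokesHSTerm_nat_add_le hd0 ht hN1
      _ = d.factorial / (2 ^ (d + 1) * (t ^ d * N ^ 2)) := by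
          field_simp; ring
      _ ≤ d.factorial / 2 ^ (d + 1) :=
          div_le_div_of_nonneg_left (by positivity) (by positivity)
            (le_mul_of_one_le_right (by positivity) htN)
  change ∑' j, stokesHSTerm d t j ≤ _
  rw [← (summable_stokesHSTerm hd0 ht).sum_add_tsum_nat_add N]
  linarith [sum_range_stokesHSTerm_le (d := d) ht.le N]
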